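/- arXiv:2503.13162 — 3 statements merged into one kernel-verified Lean document; each statement's English description precedes it below -/
import Mathlib

section
/- In the STILE setup, for any reward r : S → [0,1], discount γ ∈ [0,1), confidence level δ ∈ (0,1), and sample size N ≥ 1: with probability at least 1 − δ over the i.i.d. sample X₁,…,X_N from d^E, every output π̂ of STILE satisfies V(d^E) − V(d^{π̂}) ≤ (3/(1−γ)) · min_{π∈Π} ‖d^π − d^E‖₁ + (4/(1−γ)) · √((2 ln|Π| + ln(1/δ))/N). -/
/-!
STATEMENT 0: STILE sample complexity under misspecification.
-/

open Finset

/-- `p` is a distribution on the finite set `S`: values in `[0,1]` summing to `1`. -/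
def IsDist {S : Type*} [Fintype S] (p : S → ℝ) : Prop :=
  (∀ s, 0 ≤ p s ∧ p s ≤ 1) ∧ ∑ s, p s = 1

/-- Expectation `E_p f = ∑_s p(s) f(s)`. -/
def expct {S : Type*} [Fintype S] (p f : S → ℝ) : ℝ := ∑ s, p s * f s

/-- L¹ distance `‖p − q‖₁ = ∑_s |p(s) − q(s)|`. -/
def l1dist {S : Type*} [Fintype S] (p q : S → ℝ) : ℝ := ∑ s, |p s - q s|

/-- Witness function `f_{p,q}(s) = 1` if `p(s) ≥ q(s)`, else `−1`. -/
noncomputable def witness {S : Type*} (p q : S → ℝ) (s : S) : ℝ :=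
  if q s ≤ p s then 1 else -1

/- Probability of the event `E` under the `N`-fold product of the measure induced
by the distribution `p` on the finite set `S`. -/
open Classical in
noncomputable def prodProb {S : Type*} [Fintype S] (p : S → ℝ) (N : ℕ)
    (E : (Fin N → S) → Prop) : ℝ :=
  ∑ x : Fin N → S, if E x then ∏ i, p (x i) else 0

/-- The STILE objective: for the sample `x`, the value
`max_{f ∈ F} ( E_{d^π} f − (1/N) ∑_i f(x_i) )`, where
`F = { f_{d^a, d^b} : a ≠ b }` is the set of witness functions. -/
noncomputable def stileObj {S P : Type*} [Fintype S] [Fintype P]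
    (d : P → S → ℝ) {N : ℕ} (x : Fin N → S) (π : P) : ℝ :=
  sSup {v : ℝ | ∃ a b : P, a ≠ b ∧
    v = expct (d π) (witness (d a) (d b))
        - (1 / (N : ℝ)) * ∑ i, witness (d a) (d b) (x i)}


lemma l1dist_nonneg {S : Type*} [Fintype S] (p q : S → ℝ) : 0 ≤ l1dist p q :=
  Finset.sum_nonneg fun s _ => abs_nonneg _

lemma l1dist_symm {S : Type*} [Fintype S] (p q : S → ℝ) : l1dist p q = l1dist q p := by
  rw [l1dist, l1dist]
  exact Finset.sum_congr rfl fun s _ => abs_sub_comm _ _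

lemma l1dist_triangle {S : Type*} [Fintype S] (p q u : S → ℝ) :
    l1dist p u ≤ l1dist p q + l1dist q u := by
  rw [l1dist, l1dist, l1dist, ← Finset.sum_add_distrib]
  exact Finset.sum_le_sum fun s _ => abs_sub_le _ _ _

lemma expct_sub_le {S : Type*} [Fintype S] {p p' g : S → ℝ} (hg : ∀ s, |g s| ≤ 1) :
    expct p g - expct p' g ≤ l1dist p p' := by
  rw [expct, expct, l1dist, ← Finset.sum_sub_distrib]
  apply Finset.sum_le_sum
  intro s _
  calc p s * g s - p' s * g s = (p s - p' s) * g s := by ring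
    _ ≤ |(p s - p' s) * g s| := le_abs_self _
    _ = |p s - p' s| * |g s| := abs_mul _ _
    _ ≤ |p s - p' s| * 1 := mul_le_mul_of_nonneg_left (hg s) (abs_nonneg _)
    _ = |p s - p' s| := mul_one _

lemma witness_pm {S : Type*} (p q : S → ℝ) (s : S) :
    witness p q s = 1 ∨ witness p q s = -1 := by
  unfold witness
  split_ifs
  · exact Or.inl rfl
  · exact Or.inr rfl

lemma witness_abs_le {S : Type*} (p q : S → ℝ) (s : S) : |witness p q s| ≤ 1 := by
  rcases witness_pm p q s with h | h <;> rw [h] <;> norm_num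

lemma expct_witness {S : Type*} [Fintype S] (p q : S → ℝ) :
    expct p (witness p q) - expct q (witness p q) = l1dist p q := by
  rw [expct, expct, l1dist, ← Finset.sum_sub_distrib]
  apply Finset.sum_congr rfl
  intro s _
  unfold witness
  split_ifs with h
  · rw [abs_of_nonneg (by linarith)]; ring
  · rw [abs_of_neg (by linarith [not_le.1 h])]; ring


lemma den_pos {q : ℝ} (hq0 : 0 ≤ q) (hq1 : q ≤ 1) (u : ℝ) :
    0 < 1 - q + q * Real.exp u := by
  rcases le_or_gt 1 (Real.exp u) with h | h
  · nlinarith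
  · nlinarith [Real.exp_pos u]

lemma hoeffding_pt {q : ℝ} (hq0 : 0 ≤ q) (hq1 : q ≤ 1) (u : ℝ) :
    Real.log (1 - q + q * Real.exp u) ≤ u ^ 2 / 8 + q * u := by
  set den : ℝ → ℝ := fun v => 1 - q + q * Real.exp v with hden_def
  have hden : ∀ v, 0 < den v := den_pos hq0 hq1
  set z : ℝ → ℝ := fun v => q * Real.exp v / den v with hz_def
  have hz0 : ∀ v, 0 ≤ z v := fun v =>
    div_nonneg (mul_nonneg hq0 (Real.exp_pos v).le) (hden v).le
  have hz1 : ∀ v, z v ≤ 1 := by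
    intro v
    rw [div_le_one (hden v)]
    have : 0 ≤ 1 - q := by linarith
    simp only [hden_def]; linarith
  have hden' : ∀ v, HasDerivAt den (q * Real.exp v) v := by
    intro v
    exact ((Real.hasDerivAt_exp v).const_mul q).const_add (1 - q)
  have hlog : ∀ v, HasDerivAt (fun w => Real.log (den w)) (z v) v := by
    intro v
    exact (hden' v).log (hden v).ne'
  have hz' : ∀ v, HasDerivAt z (z v * (1 - z v)) v := by
    intro v
    have h := (hden' v).const_mul q  -- derivative of q * exp, same
    have hnum : HasDerivAt (fun w => q * Real.exp w) (q * Real.exp v) v :=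
      (Real.hasDerivAt_exp v).const_mul q
    have := hnum.div (hden' v) (hden v).ne'
    convert this using 1
    · rfl
    · rfl
    · rfl
    have hd := (hden v).ne'
    simp only [hz_def]
    field_simp
  -- Lipschitz bound on z
  have hlip : ∀ v, |z v - z 0| ≤ 1/4 * |v - 0| := by
    intro v
    have := Convex.norm_image_sub_le_of_norm_hasDerivWithin_le
      (f := z) (f' := fun w => z w * (1 - z w)) (C := 1/4) (s := Set.univ)
      (fun w _ => (hz' w).hasDerivWithinAt)
      (fun w _ => by
        show ‖z w * (1 - z w)‖ ≤ 1/4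
        rw [Real.norm_eq_abs, abs_of_nonneg (by nlinarith [hz0 w, hz1 w])]
        nlinarith [sq_nonneg (z w - 1/2)])
      convex_univ (Set.mem_univ 0) (Set.mem_univ v)
    simpa [Real.norm_eq_abs] using this
  have hz_zero : z 0 = q := by simp [hz_def, hden_def]
  set H : ℝ → ℝ := fun v => v ^ 2 / 8 + q * v - Real.log (den v) with hH_def
  have hH' : ∀ v, HasDerivAt H (v / 4 + q - z v) v := by
    intro v
    have h1 : HasDerivAt (fun w : ℝ => w ^ 2 / 8 + q * w)
        (v / 4 + q) v := by
      have := ((hasDerivAt_pow 2 v).div_const 8).add ((hasDerivAt_id v).const_mul q)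
      convert this using 1
      · rfl
      · rfl
      · rfl
      simp; ring
    exact h1.sub (hlog v)
  have hHd : ∀ v, deriv H v = v / 4 + q - z v := fun v => (hH' v).deriv
  have hH0 : H 0 = 0 := by simp [hH_def, hden_def]
  have hHnonneg : ∀ v, 0 ≤ H v := by
    intro v
    have hdiff : Differentiable ℝ H := fun w => (hH' w).differentiableAt
    rcases le_total 0 v with hv | hv
    · have hmono : MonotoneOn H (Set.Ici 0) := by
        apply monotoneOn_of_deriv_nonneg (convex_Ici 0) hdiff.continuous.continuousOn
          hdiff.differentiableOn
        intro w hw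
        rw [interior_Ici] at hw
        have hw' : 0 < w := hw
        rw [hHd w]
        have hb := hlip w
        rw [hz_zero, sub_zero, abs_of_nonneg hw'.le] at hb
        have := abs_le.1 hb
        linarith [this.2]
      have := hmono (Set.mem_Ici.2 le_rfl) (Set.mem_Ici.2 hv) hv
      linarith [hH0 ▸ this]
    · have hanti : AntitoneOn H (Set.Iic 0) := by
        apply antitoneOn_of_deriv_nonpos (convex_Iic 0) hdiff.continuous.continuousOn
          hdiff.differentiableOn
        intro w hw
        rw [interior_Iic] at hw
        have hw' : w < 0 := hw
        rw [hHd w]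
        have hb := hlip w
        rw [hz_zero, sub_zero, abs_of_nonpos hw'.le] at hb
        have := abs_le.1 hb
        linarith [this.1]
      have := hanti (Set.mem_Iic.2 hv) (Set.mem_Iic.2 le_rfl) hv
      linarith [hH0 ▸ this]
  have := hHnonneg u
  simp only [hH_def] at this
  linarith

lemma mgf_pt {q : ℝ} (hq0 : 0 ≤ q) (hq1 : q ≤ 1) (t : ℝ) :
    q * Real.exp (t * (1 - (2 * q - 1))) + (1 - q) * Real.exp (t * (-1 - (2 * q - 1)))
      ≤ Real.exp (t ^ 2 / 2) := by
  have hpos := den_pos hq0 hq1 (2 * t)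
  have hlhs : q * Real.exp (t * (1 - (2 * q - 1))) + (1 - q) * Real.exp (t * (-1 - (2 * q - 1)))
      = Real.exp (-(2 * t) * q) * (1 - q + q * Real.exp (2 * t)) := by
    rw [show t * (1 - (2 * q - 1)) = -(2*t)*q + 2*t by ring,
        show t * (-1 - (2 * q - 1)) = -(2*t)*q by ring, Real.exp_add]
    ring
  rw [hlhs, ← Real.exp_log hpos, ← Real.exp_add]
  apply Real.exp_le_exp.2
  have := hoeffding_pt hq0 hq1 (2 * t)
  nlinarith

section Prob
variable {S : Type*} [Fintype S] {p : S → ℝ} {N : ℕ}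

lemma mgf_sum (hp : IsDist p) {f : S → ℝ} (hf : ∀ s, f s = 1 ∨ f s = -1) (t : ℝ) :
    ∑ s, p s * Real.exp (t * (f s - expct p f)) ≤ Real.exp (t ^ 2 / 2) := by
  classical
  set q : ℝ := ∑ s ∈ univ.filter (fun s => f s = 1), p s with hq_def
  have hsplit : ∀ g : S → ℝ,
      ∑ s, g s = ∑ s ∈ univ.filter (fun s => f s = 1), g s
        + ∑ s ∈ univ.filter (fun s => ¬ f s = 1), g s :=
    fun g => (Finset.sum_filter_add_sum_filter_not univ _ g).symm
  have hq0 : 0 ≤ q := Finset.sum_nonneg fun s _ => (hp.1 s).1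
  have hq1' : ∑ s ∈ univ.filter (fun s => ¬ f s = 1), p s = 1 - q := by
    have := hsplit p
    rw [hp.2] at this; linarith
  have hq1 : q ≤ 1 := by
    have : 0 ≤ 1 - q := hq1' ▸ Finset.sum_nonneg fun s _ => (hp.1 s).1
    linarith
  have hneg : ∀ s ∈ univ.filter (fun s => ¬ f s = 1), f s = -1 := by
    intro s hs
    rcases hf s with h | h
    · exact absurd h (by simpa using hs)
    · exact h
  have hmu : expct p f = 2 * q - 1 := by
    have h1 : ∑ s ∈ univ.filter (fun s => f s = 1), p s * f s = q := by
      rw [hq_def]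
      apply Finset.sum_congr rfl
      intro s hs
      rw [show f s = 1 from by simpa using (Finset.mem_filter.1 hs).2, mul_one]
    have h2 : ∑ s ∈ univ.filter (fun s => ¬ f s = 1), p s * f s = (1 - q) * (-1) := by
      rw [← hq1', Finset.sum_mul]
      apply Finset.sum_congr rfl
      intro s hs
      rw [hneg s hs]
    rw [expct, hsplit (fun s => p s * f s), h1, h2]; ring
  have hL : ∑ s, p s * Real.exp (t * (f s - expct p f))
      = q * Real.exp (t * (1 - (2 * q - 1))) + (1 - q) * Real.exp (t * (-1 - (2 * q - 1))) := by
    rw [hsplit (fun s => p s * Real.exp (t * (f s - expct p f)))]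
    have h1 : ∑ s ∈ univ.filter (fun s => f s = 1), p s * Real.exp (t * (f s - expct p f))
        = q * Real.exp (t * (1 - (2 * q - 1))) := by
      rw [hq_def, Finset.sum_mul]
      apply Finset.sum_congr rfl
      intro s hs
      rw [show f s = 1 from by simpa using (Finset.mem_filter.1 hs).2, hmu]
    have h2 : ∑ s ∈ univ.filter (fun s => ¬ f s = 1), p s * Real.exp (t * (f s - expct p f))
        = (1 - q) * Real.exp (t * (-1 - (2 * q - 1))) := by
      rw [← hq1', Finset.sum_mul]
      apply Finset.sum_congr rfl
      intro s hs
      rw [hneg s hs, hmu]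
    rw [h1, h2]
  rw [hL]
  exact mgf_pt hq0 hq1 t


lemma sum_prod_pow (g : S → ℝ) : ∑ x : Fin N → S, ∏ i, g (x i) = (∑ s, g s) ^ N := by
  classical
  rw [← Fintype.piFinset_univ, ← Finset.prod_univ_sum]
  simp

lemma prodProb_nonneg (hp : ∀ s, 0 ≤ p s) (E : (Fin N → S) → Prop) :
    0 ≤ prodProb p N E := by
  rw [prodProb]
  apply Finset.sum_nonneg
  intro x _
  split_ifs
  · exact Finset.prod_nonneg fun i _ => hp _
  · exact le_rfl

lemma prodProb_mono (hp : ∀ s, 0 ≤ p s) {E E' : (Fin N → S) → Prop}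
    (h : ∀ x, E x → E' x) : prodProb p N E ≤ prodProb p N E' := by
  rw [prodProb, prodProb]
  apply Finset.sum_le_sum
  intro x _
  split_ifs with h1 h2
  · exact le_rfl
  · exact absurd (h x h1) h2
  · exact Finset.prod_nonneg fun i _ => hp _
  · exact le_rfl

lemma prodProb_total (hp : IsDist p) (E : (Fin N → S) → Prop) :
    prodProb p N E + prodProb p N (fun x => ¬ E x) = 1 := by
  rw [prodProb, prodProb, ← Finset.sum_add_distrib]
  have h2 : ∑ x : Fin N → S, ∏ i, p (x i) = 1 := by
    rw [sum_prod_pow, hp.2, one_pow]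
  rw [← h2]
  apply Finset.sum_congr rfl
  intro x _
  split_ifs <;> simp

lemma prodProb_or (hp : ∀ s, 0 ≤ p s) {E E' : (Fin N → S) → Prop} :
    prodProb p N (fun x => E x ∨ E' x) ≤ prodProb p N E + prodProb p N E' := by
  rw [prodProb, prodProb, prodProb, ← Finset.sum_add_distrib]
  apply Finset.sum_le_sum
  intro x _
  have hx : (0:ℝ) ≤ ∏ i, p (x i) := Finset.prod_nonneg fun i _ => hp _
  split_ifs <;> first
    | positivity
    | linarith
    | tauto

lemma prodProb_union (hp : ∀ s, 0 ≤ p s) {ι : Type*} (A : Finset ι)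
    (Bad : ι → (Fin N → S) → Prop) :
    prodProb p N (fun x => ∃ k ∈ A, Bad k x) ≤ ∑ k ∈ A, prodProb p N (Bad k) := by
  classical
  rw [prodProb]
  rw [show ∑ k ∈ A, prodProb p N (Bad k)
      = ∑ x : Fin N → S, ∑ k ∈ A, (if Bad k x then ∏ i, p (x i) else 0) from by
    rw [Finset.sum_comm]; rfl]
  apply Finset.sum_le_sum
  intro x _
  have hx : (0:ℝ) ≤ ∏ i, p (x i) := Finset.prod_nonneg fun i _ => hp _
  split_ifs with h1
  · obtain ⟨k, hk, hbad⟩ := h1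
    calc ∏ i, p (x i) = (if Bad k x then ∏ i, p (x i) else 0) := by rw [if_pos hbad]
    _ ≤ ∑ k ∈ A, (if Bad k x then ∏ i, p (x i) else 0) := by
        apply Finset.single_le_sum (fun j _ => ?_) hk
        split_ifs
        · exact hx
        · exact le_rfl
  · apply Finset.sum_nonneg
    intro k _
    split_ifs
    · exact hx
    · exact le_rfl

lemma chernoff_one (hp : IsDist p) {f : S → ℝ} (hf : ∀ s, f s = 1 ∨ f s = -1)
    {ε : ℝ} (hε : 0 ≤ ε) :
    prodProb p N (fun x => (N:ℝ) * ε ≤ (∑ i, f (x i)) - N * expct p f)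
      ≤ Real.exp (-((N:ℝ) * ε ^ 2 / 2)) := by
  classical
  set μ := expct p f with hμ
  set g : S → ℝ := fun s => p s * Real.exp (ε * (f s - μ)) with hg
  have step1 : prodProb p N (fun x => (N:ℝ)*ε ≤ (∑ i, f (x i)) - N*μ)
      ≤ ∑ x : Fin N → S, Real.exp (-((N:ℝ)*ε^2)) * ∏ i, g (x i) := by
    rw [prodProb]
    apply Finset.sum_le_sum
    intro x _
    have key : Real.exp (-((N:ℝ)*ε^2)) * ∏ i, g (x i)
        = (∏ i, p (x i)) * Real.exp (ε * ((∑ i, f (x i)) - N*μ) - (N:ℝ)*ε^2) := by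
      have hsum : ∑ i, ε * (f (x i) - μ) = ε * ((∑ i, f (x i)) - (N:ℝ)*μ) := by
        rw [← Finset.mul_sum, Finset.sum_sub_distrib, Finset.sum_const,
          Finset.card_univ, Fintype.card_fin, nsmul_eq_mul]
      rw [hg, Finset.prod_mul_distrib, ← Real.exp_sum, hsum,
        show ε * ((∑ i, f (x i)) - (N:ℝ)*μ) - (N:ℝ)*ε^2
          = ε * ((∑ i, f (x i)) - (N:ℝ)*μ) + (-((N:ℝ)*ε^2)) from by ring,
        Real.exp_add]
      ring
    rw [key]
    split_ifs with hx
    · apply le_mul_of_one_le_right (Finset.prod_nonneg fun i _ => (hp.1 _).1)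
      apply Real.one_le_exp
      nlinarith
    · exact mul_nonneg (Finset.prod_nonneg fun i _ => (hp.1 _).1) (Real.exp_pos _).le
  calc prodProb p N (fun x => (N:ℝ)*ε ≤ (∑ i, f (x i)) - N*μ)
      ≤ ∑ x : Fin N → S, Real.exp (-((N:ℝ)*ε^2)) * ∏ i, g (x i) := step1
    _ = Real.exp (-((N:ℝ)*ε^2)) * (∑ s, g s) ^ N := by
        rw [← Finset.mul_sum, sum_prod_pow]
    _ ≤ Real.exp (-((N:ℝ)*ε^2)) * (Real.exp (ε^2/2)) ^ N := by
        apply mul_le_mul_of_nonneg_left _ (Real.exp_pos _).le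
        apply pow_le_pow_left₀ (Finset.sum_nonneg fun s _ =>
          mul_nonneg (hp.1 s).1 (Real.exp_pos _).le)
        exact mgf_sum hp hf ε
    _ = Real.exp (-((N:ℝ) * ε^2 / 2)) := by
        rw [← Real.exp_nat_mul, ← Real.exp_add]
        congr 1
        ring

lemma expct_neg (p f : S → ℝ) : expct p (fun s => -f s) = -expct p f := by
  rw [expct, expct, ← Finset.sum_neg_distrib]
  apply Finset.sum_congr rfl
  intro s _
  ring

lemma chernoff_two (hp : IsDist p) {f : S → ℝ} (hf : ∀ s, f s = 1 ∨ f s = -1)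
    {ε : ℝ} (hε : 0 ≤ ε) :
    prodProb p N (fun x => (N:ℝ) * ε ≤ |(∑ i, f (x i)) - N * expct p f|)
      ≤ 2 * Real.exp (-((N:ℝ) * ε ^ 2 / 2)) := by
  have hmono : ∀ x : Fin N → S, ((N:ℝ) * ε ≤ |(∑ i, f (x i)) - N * expct p f|) →
      (((N:ℝ) * ε ≤ (∑ i, f (x i)) - N * expct p f) ∨
       ((N:ℝ) * ε ≤ (∑ i, (fun s => -f s) (x i)) - N * expct p (fun s => -f s))) := by
    intro x hx
    simp only [expct_neg, Finset.sum_neg_distrib]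
    rcases abs_cases ((∑ i, f (x i)) - (N:ℝ) * expct p f) with ⟨he, _⟩ | ⟨he, _⟩
    · exact Or.inl (by linarith [he ▸ hx])
    · exact Or.inr (by linarith [he ▸ hx])
  calc prodProb p N (fun x => (N:ℝ) * ε ≤ |(∑ i, f (x i)) - N * expct p f|)
      ≤ prodProb p N (fun x => ((N:ℝ) * ε ≤ (∑ i, f (x i)) - N * expct p f) ∨
          ((N:ℝ) * ε ≤ (∑ i, (fun s => -f s) (x i)) - N * expct p (fun s => -f s))) :=
        prodProb_mono (fun s => (hp.1 s).1) hmono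
    _ ≤ _ + _ := prodProb_or (fun s => (hp.1 s).1)
    _ ≤ 2 * Real.exp (-((N:ℝ) * ε ^ 2 / 2)) := by
        have h1 := chernoff_one (N := N) hp hf hε
        have h2 := chernoff_one (N := N) hp (f := fun s => -f s)
          (fun s => by rcases hf s with h | h <;> simp [h]) hε
        linarith

end Prob

/-- Sample complexity of STILE under misspecification: with probability at least
`1 − δ` over the i.i.d. sample from `d^E`, every STILE output `π̂` satisfies
`V(d^E) − V(d^{π̂}) ≤ (3/(1−γ)) min_π ‖d^π − d^E‖₁
  + (4/(1−γ)) √((2 ln|Π| + ln(1/δ))/N)`. -/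
theorem stile_misspecified
    {S P : Type*} [Fintype S] [Nonempty S] [Fintype P]
    (hP : 2 ≤ Fintype.card P)
    (d : P → S → ℝ) (hd : ∀ π, IsDist (d π))
    (dE : S → ℝ) (hdE : IsDist dE)
    (r : S → ℝ) (hr : ∀ s, 0 ≤ r s ∧ r s ≤ 1)
    (γ : ℝ) (hγ : 0 ≤ γ ∧ γ < 1)
    (δ : ℝ) (hδ : 0 < δ ∧ δ < 1)
    (N : ℕ) (hN : 1 ≤ N) :
    1 - δ ≤ prodProb dE N (fun x => ∀ πhat : P,
      (∀ π' : P, stileObj d x πhat ≤ stileObj d x π') →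
      expct dE r / (1 - γ) - expct (d πhat) r / (1 - γ) ≤
        (3 / (1 - γ)) * (⨅ π : P, l1dist (d π) dE) +
        (4 / (1 - γ)) *
          Real.sqrt ((2 * Real.log (Fintype.card P) + Real.log (1 / δ)) / N)) := by
  classical
  obtain ⟨hγ0, hγ1⟩ := hγ
  obtain ⟨hδ0, hδ1⟩ := hδ
  have hg : 0 < 1 - γ := by linarith
  have hNpos : (0:ℝ) < N := by exact_mod_cast hN
  have hdE0 : ∀ s, 0 ≤ dE s := fun s => (hdE.1 s).1
  obtain ⟨a0, b0, hab0⟩ := Fintype.exists_pair_of_one_lt_card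
    (lt_of_lt_of_le one_lt_two hP)
  have hPne : Nonempty P := ⟨a0⟩
  set K : ℝ := (Fintype.card P : ℝ) with hK_def
  have hK2 : (2:ℝ) ≤ K := by rw [hK_def]; exact_mod_cast hP
  have hK0 : (0:ℝ) < K := by linarith
  set L : ℝ := Real.log K with hL_def
  set D : ℝ := Real.log (1/δ) with hD_def
  have hL : 0 ≤ L := Real.log_nonneg (by linarith)
  have hD : 0 ≤ D := Real.log_nonneg (by rw [le_div_iff₀ hδ0]; linarith)
  set sq : ℝ := Real.sqrt ((2*L + D)/N) with hsq_def
  have hs0 : 0 ≤ sq := Real.sqrt_nonneg _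
  have hs2 : sq^2 = (2*L + D)/N := Real.sq_sqrt (by positivity)
  set ε : ℝ := 2*sq with hε_def
  have hε0 : 0 ≤ ε := by positivity
  -- the good event
  set G : (Fin N → S) → Prop := fun x => ∀ a b : P, a ≠ b →
    |(∑ i, witness (d a) (d b) (x i)) - N * expct dE (witness (d a) (d b))| ≤ N * ε
    with hG_def
  -- concentration: failure probability at most δ
  have hfail : prodProb dE N (fun x => ¬ G x) ≤ δ := by
    have hsub : ∀ x, ¬ G x → ∃ ab ∈ (Finset.univ : Finset (P × P)),
        (N:ℝ) * ε ≤ |(∑ i, witness (d ab.1) (d ab.2) (x i))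
          - N * expct dE (witness (d ab.1) (d ab.2))| := by
      intro x hx
      simp only [hG_def, not_forall] at hx
      obtain ⟨a, b, hab, hgt⟩ := hx
      exact ⟨(a, b), Finset.mem_univ _, (not_le.1 hgt).le⟩
    have hNε : (N:ℝ) * ε^2 / 2 = 2*(2*L + D) := by
      rw [hε_def, mul_pow, hs2]
      field_simp
    have hexp : Real.exp (-((N:ℝ) * ε^2 / 2)) = δ^2 / K^4 := by
      have h1 : Real.exp L = K := Real.exp_log hK0
      have h2 : Real.exp D = 1/δ := Real.exp_log (by positivity)
      have e4 : Real.exp L ^ (4:ℕ) = Real.exp (4*L) := by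
        rw [← Real.exp_nat_mul]; norm_num
      have e2 : Real.exp D ^ (2:ℕ) = Real.exp (2*D) := by
        rw [← Real.exp_nat_mul]; norm_num
      rw [hNε]
      have : Real.exp (-(2*(2*L+D))) * (Real.exp (4*L) * Real.exp (2*D)) = 1 := by
        rw [← Real.exp_add, ← Real.exp_add, ← Real.exp_zero]
        congr 1
        ring
      rw [← e4, ← e2, h1, h2] at this
      have hδne : (1/δ)^(2:ℕ) = 1/δ^2 := by field_simp
      rw [hδne] at this
      field_simp at this ⊢
      linarith
    calc prodProb dE N (fun x => ¬ G x)
        ≤ prodProb dE N (fun x => ∃ ab ∈ (Finset.univ : Finset (P × P)),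
            (N:ℝ) * ε ≤ |(∑ i, witness (d ab.1) (d ab.2) (x i))
              - N * expct dE (witness (d ab.1) (d ab.2))|) :=
          prodProb_mono hdE0 hsub
      _ ≤ ∑ ab ∈ (Finset.univ : Finset (P × P)), prodProb dE N (fun x =>
            (N:ℝ) * ε ≤ |(∑ i, witness (d ab.1) (d ab.2) (x i))
              - N * expct dE (witness (d ab.1) (d ab.2))|) :=
          prodProb_union hdE0 _ _
      _ ≤ ∑ _ab ∈ (Finset.univ : Finset (P × P)), 2 * Real.exp (-((N:ℝ) * ε^2 / 2)) :=
          Finset.sum_le_sum fun ab _ =>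
            chernoff_two hdE (witness_pm (d ab.1) (d ab.2)) hε0
      _ = K^2 * (2 * Real.exp (-((N:ℝ) * ε^2 / 2))) := by
          rw [Finset.sum_const, Finset.card_univ, Fintype.card_prod, nsmul_eq_mul]
          push_cast [hK_def]
          ring
      _ = 2 * δ^2 / K^2 := by
          rw [hexp]
          field_simp
      _ ≤ δ := by
          rw [div_le_iff₀ (by positivity)]
          have hK4 : (4:ℝ) ≤ K^2 := by nlinarith
          nlinarith [mul_le_mul_of_nonneg_left hK4 hδ0.le,
            mul_le_mul_of_nonneg_left hδ1.le hδ0.le]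
  -- deterministic analysis on the good event
  have hkey : ∀ x, G x → ∀ πhat : P,
      (∀ π' : P, stileObj d x πhat ≤ stileObj d x π') →
      expct dE r / (1 - γ) - expct (d πhat) r / (1 - γ) ≤
        (3 / (1 - γ)) * (⨅ π : P, l1dist (d π) dE) + (4 / (1 - γ)) * sq := by
    intro x hx πhat hmin
    have hobj : ∀ π : P, stileObj d x π = sSup {v : ℝ | ∃ a b : P, a ≠ b ∧
        v = expct (d π) (witness (d a) (d b))
          - (1 / (N : ℝ)) * ∑ i, witness (d a) (d b) (x i)} := fun π => rfl
    have bdd : ∀ π : P, BddAbove {v : ℝ | ∃ a b : P, a ≠ b ∧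
        v = expct (d π) (witness (d a) (d b))
          - (1 / (N : ℝ)) * ∑ i, witness (d a) (d b) (x i)} := by
      intro π
      apply Set.Finite.bddAbove
      apply Set.Finite.subset (Set.finite_range (fun ab : P × P =>
        expct (d π) (witness (d ab.1) (d ab.2))
          - (1 / (N : ℝ)) * ∑ i, witness (d ab.1) (d ab.2) (x i)))
      rintro v ⟨a, b, hab, rfl⟩
      exact ⟨(a, b), rfl⟩
    have le_obj : ∀ π a b : P, a ≠ b →
        expct (d π) (witness (d a) (d b))
          - (1 / (N : ℝ)) * ∑ i, witness (d a) (d b) (x i) ≤ stileObj d x π := by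
      intro π a b hab
      rw [hobj π]
      exact le_csSup (bdd π) ⟨a, b, hab, rfl⟩
    have obj_le : ∀ (π : P) (c : ℝ), (∀ a b : P, a ≠ b →
        expct (d π) (witness (d a) (d b))
          - (1 / (N : ℝ)) * ∑ i, witness (d a) (d b) (x i) ≤ c) →
        stileObj d x π ≤ c := by
      intro π c hc
      rw [hobj π]
      refine csSup_le ⟨_, ⟨a0, b0, hab0, rfl⟩⟩ ?_
      rintro v ⟨a, b, hab, rfl⟩
      exact hc a b hab
    -- empirical accuracy on the good event
    have hx' : ∀ a b : P, a ≠ b →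
        |expct dE (witness (d a) (d b))
          - (1 / (N : ℝ)) * ∑ i, witness (d a) (d b) (x i)| ≤ ε := by
      intro a b hab
      have h := hx a b hab
      rw [abs_sub_comm] at h
      have heq : expct dE (witness (d a) (d b))
          - (1 / (N : ℝ)) * ∑ i, witness (d a) (d b) (x i)
          = (1 / (N : ℝ)) * ((N:ℝ) * expct dE (witness (d a) (d b))
              - ∑ i, witness (d a) (d b) (x i)) := by
        field_simp
      rw [heq, abs_mul, abs_of_pos (by positivity : (0:ℝ) < 1/(N:ℝ))]
      calc (1/(N:ℝ)) * |(N:ℝ) * expct dE (witness (d a) (d b))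
            - ∑ i, witness (d a) (d b) (x i)|
          ≤ (1/(N:ℝ)) * ((N:ℝ) * ε) := by
            apply mul_le_mul_of_nonneg_left _ (by positivity)
            exact h
        _ = ε := by field_simp
    -- best approximating policy
    obtain ⟨πs, hπs⟩ := Finite.exists_min (fun π : P => l1dist (d π) dE)
    have hinf : (⨅ π : P, l1dist (d π) dE) = l1dist (d πs) dE :=
      le_antisymm (ciInf_le (Finite.bddBelow_range _) πs) (le_ciInf hπs)
    -- objective at πs is small
    have h_obj_star : stileObj d x πs ≤ l1dist (d πs) dE + ε := by
      apply obj_le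
      intro a b hab
      have h1 : expct (d πs) (witness (d a) (d b)) - expct dE (witness (d a) (d b))
          ≤ l1dist (d πs) dE := expct_sub_le (witness_abs_le (d a) (d b))
      have h2 := (abs_le.1 (hx' a b hab)).2
      linarith
    -- main bound
    have hmain : l1dist (d πhat) dE ≤ 3 * l1dist (d πs) dE + 2 * ε := by
      by_cases hcase : πhat = πs
      · subst hcase
        have := l1dist_nonneg (d πhat) dE
        linarith
      · have hkey1 : l1dist (d πhat) (d πs)
            = expct (d πhat) (witness (d πhat) (d πs))
              - expct (d πs) (witness (d πhat) (d πs)) :=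
          (expct_witness (d πhat) (d πs)).symm
        have t1 := le_obj πhat πhat πs hcase
        have t2 := hmin πs
        have t3 : (1 / (N : ℝ)) * (∑ i, witness (d πhat) (d πs) (x i))
            - expct dE (witness (d πhat) (d πs)) ≤ ε := by
          have := (abs_le.1 (hx' πhat πs hcase)).1
          linarith
        have t4 : expct dE (witness (d πhat) (d πs))
            - expct (d πs) (witness (d πhat) (d πs)) ≤ l1dist dE (d πs) :=
          expct_sub_le (witness_abs_le (d πhat) (d πs))
        have t5 : l1dist dE (d πs) = l1dist (d πs) dE := l1dist_symm _ _
        have t6 := l1dist_triangle (d πhat) (d πs) dE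
        linarith
    -- conclude
    have hr1 : expct dE r - expct (d πhat) r ≤ l1dist dE (d πhat) :=
      expct_sub_le (fun s => by
        rcases hr s with ⟨h1, h2⟩
        rw [abs_of_nonneg h1]
        exact h2)
    rw [l1dist_symm] at hr1
    rw [hinf]
    calc expct dE r / (1 - γ) - expct (d πhat) r / (1 - γ)
        = (expct dE r - expct (d πhat) r) / (1 - γ) := by ring
      _ ≤ (3 * l1dist (d πs) dE + 4 * sq) / (1 - γ) := by
          apply (div_le_div_iff_of_pos_right hg).2
          linarith
      _ = (3 / (1 - γ)) * l1dist (d πs) dE + (4 / (1 - γ)) * sq := by ring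
  -- assemble
  have htotal := prodProb_total (N := N) hdE (fun x => G x)
  have hGP : 1 - δ ≤ prodProb dE N G := by linarith
  calc (1:ℝ) - δ ≤ prodProb dE N G := hGP
    _ ≤ _ := prodProb_mono hdE0 hkey
end

section
/- In the STILE setup, assume additionally that the expert is realizable, i.e., d^E = d^{π*} for some π* ∈ Π. Then for any reward r : S → [0,1], discount γ ∈ [0,1), confidence level δ ∈ (0,1), and sample size N ≥ 1: with probability at least 1 − δ over the i.i.d. sample X₁,…,X_N from d^E, every output π̂ of STILE satisfies V(d^E) − V(d^{π̂}) ≤ (4/(1−γ)) · √((2 ln|Π| + ln(1/δ))/N). -/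
/-!
STATEMENT 1: STILE sample complexity in the realizable case.
-/

open Finset

section prodProbLemmas
variable {S : Type*} [Fintype S] {p : S → ℝ} {N : ℕ}

lemma prodProb_compl (hp : IsDist p) (E : (Fin N → S) → Prop) :
    prodProb p N E = 1 - prodProb p N (fun x => ¬ E x) := by
  classical
  have htot : prodProb p N E + prodProb p N (fun x => ¬ E x) = 1 := by
    unfold prodProb
    rw [← Finset.sum_add_distrib]
    trans (∑ x : Fin N → S, ∏ i, p (x i))
    · exact Finset.sum_congr rfl fun x _ => by by_cases hE : E x <;> simp [hE]
    · rw [← Fintype.sum_pow p N, hp.2, one_pow]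
  linarith

lemma prodProb_exists {ι : Type*} [Fintype ι] (hp : ∀ s, 0 ≤ p s)
    (E : ι → (Fin N → S) → Prop) :
    prodProb p N (fun x => ∃ i, E i x) ≤ ∑ i, prodProb p N (E i) := by
  classical
  unfold prodProb
  rw [Finset.sum_comm]
  apply Finset.sum_le_sum
  intro x _
  have hw : 0 ≤ ∏ i, p (x i) := Finset.prod_nonneg fun i _ => hp _
  split_ifs with h
  · obtain ⟨i0, hi0⟩ := h
    calc ∏ i, p (x i) = if E i0 x then ∏ i, p (x i) else 0 := (if_pos hi0).symm
      _ ≤ ∑ i, if E i x then ∏ j, p (x j) else 0 := by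
        apply Finset.single_le_sum (f := fun i => if E i x then ∏ j, p (x j) else 0)
          (fun i _ => by split_ifs <;> simp [hw]) (Finset.mem_univ i0)
  · exact Finset.sum_nonneg fun i _ => by split_ifs <;> simp [hw]

end prodProbLemmas

lemma gpos {μ : ℝ} (hμ : |μ| ≤ 1) (l : ℝ) : 0 < Real.cosh l + μ * Real.sinh l := by
  have h1 : Real.cosh l ^ 2 = Real.sinh l ^ 2 + 1 := Real.cosh_sq l
  have h2 : |μ * Real.sinh l| ≤ |Real.sinh l| := by
    rw [abs_mul]
    exact mul_le_of_le_one_left (abs_nonneg _) hμ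
  have h3 : |Real.sinh l| < Real.cosh l := by
    nlinarith [Real.cosh_pos l, abs_nonneg (Real.sinh l), sq_abs (Real.sinh l)]
  have := neg_abs_le (μ * Real.sinh l)
  have := abs_le.mp h2
  linarith

lemma hoeffA {μ : ℝ} (hμ : |μ| ≤ 1) (l : ℝ) :
    Real.cosh l + μ * Real.sinh l ≤ Real.exp (l ^ 2 / 2 + l * μ) := by
  set g : ℝ → ℝ := fun y => Real.cosh y + μ * Real.sinh y with hgdef
  set n : ℝ → ℝ := fun y => Real.sinh y + μ * Real.cosh y with hndef
  have hg : ∀ y, HasDerivAt g (n y) y := fun y =>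
    (Real.hasDerivAt_cosh y).add ((Real.hasDerivAt_sinh y).const_mul μ)
  have hn : ∀ y, HasDerivAt n (g y) y := fun y =>
    (Real.hasDerivAt_sinh y).add ((Real.hasDerivAt_cosh y).const_mul μ)
  have hgpos : ∀ y, 0 < g y := fun y => gpos hμ y
  set φ : ℝ → ℝ := fun y => y + μ - n y / g y with hφdef
  have hφ : ∀ y, HasDerivAt φ (n y ^ 2 / g y ^ 2) y := by
    intro y
    have hq : HasDerivAt (fun z => n z / g z)
        ((g y * g y - n y * n y) / g y ^ 2) y := (hn y).div (hg y) (hgpos y).ne'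
    have h0 : HasDerivAt φ (1 - (g y * g y - n y * n y) / g y ^ 2) y :=
      ((hasDerivAt_id y).add_const μ).sub hq
    have hgy := (hgpos y).ne'
    convert h0 using 1
    field_simp
    ring
  have hφmono : Monotone φ :=
    monotone_of_deriv_nonneg (fun y => (hφ y).differentiableAt)
      (fun y => by rw [(hφ y).deriv]; positivity)
  have hφ0 : φ 0 = 0 := by simp [hφdef, hndef, hgdef]
  set F : ℝ → ℝ := fun y => y ^ 2 / 2 + y * μ - Real.log (g y) with hFdef
  have hF : ∀ y, HasDerivAt F (φ y) y := by
    intro y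
    have h1 : HasDerivAt (fun z : ℝ => z ^ 2 / 2 + z * μ) (y + μ) y := by
      have h1' := ((hasDerivAt_pow 2 y).div_const 2).add ((hasDerivAt_id y).mul_const μ)
      norm_num at h1'
      exact h1'
    have h2 : HasDerivAt (fun z => Real.log (g z)) (n y / g y) y :=
      (hg y).log (hgpos y).ne'
    exact h1.sub h2
  have hF0 : F 0 = 0 := by simp [hFdef, hgdef]
  have hFnonneg : 0 ≤ F l := by
    have hFd : Differentiable ℝ F := fun y => (hF y).differentiableAt
    rcases le_or_gt 0 l with h | h
    · have hm : MonotoneOn F (Set.Ici 0) :=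
        monotoneOn_of_deriv_nonneg (convex_Ici 0) hFd.continuous.continuousOn
          hFd.differentiableOn
          (fun x hx => by
            rw [(hF x).deriv, ← hφ0]
            exact hφmono (le_of_lt (by simpa using hx)))
      simpa [hF0] using hm Set.self_mem_Ici h h
    · have hm : AntitoneOn F (Set.Iic 0) :=
        antitoneOn_of_deriv_nonpos (convex_Iic 0) hFd.continuous.continuousOn
          hFd.differentiableOn
          (fun x hx => by
            rw [(hF x).deriv, ← hφ0]
            exact hφmono (le_of_lt (by simpa using hx)))
      simpa [hF0] using hm h.le Set.self_mem_Iic h.le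
  have hlog : Real.log (g l) ≤ l ^ 2 / 2 + l * μ := by
    have := hFnonneg; simp only [hFdef] at this; linarith
  calc g l = Real.exp (Real.log (g l)) := (Real.exp_log (hgpos l)).symm
    _ ≤ _ := Real.exp_le_exp.mpr hlog

lemma abs_expct_le {S : Type*} [Fintype S] {p : S → ℝ} (hp : IsDist p)
    {g : S → ℝ} (hg : ∀ s, g s = 1 ∨ g s = -1) : |expct p g| ≤ 1 := by
  unfold expct
  calc |∑ s, p s * g s| ≤ ∑ s, |p s * g s| := Finset.abs_sum_le_sum_abs _ _
    _ = ∑ s, p s := Finset.sum_congr rfl fun s _ => by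
        rcases hg s with h | h <;> rw [h] <;>
          simp [abs_of_nonneg (hp.1 s).1]
    _ = 1 := hp.2

lemma mgf_le {S : Type*} [Fintype S] {p : S → ℝ} (hp : IsDist p)
    (g : S → ℝ) (hg : ∀ s, g s = 1 ∨ g s = -1) (l : ℝ) :
    ∑ s, p s * Real.exp (l * (g s - expct p g)) ≤ Real.exp (l ^ 2 / 2) := by
  set μ := expct p g with hμdef
  have hμ : |μ| ≤ 1 := abs_expct_le hp hg
  have key : ∀ s, Real.exp (l * g s) = Real.cosh l + g s * Real.sinh l := by
    intro s; rcases hg s with h | h <;> rw [h]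
    · rw [mul_one, ← Real.cosh_add_sinh]; ring
    · rw [mul_neg_one, ← Real.cosh_sub_sinh]; ring
  calc ∑ s, p s * Real.exp (l * (g s - μ))
      = ∑ s, Real.exp (-(l*μ)) * (p s * Real.cosh l + (p s * g s) * Real.sinh l) := by
        refine Finset.sum_congr rfl fun s _ => ?_
        rw [show l * (g s - μ) = l * g s + (-(l*μ)) by ring, Real.exp_add, key s]; ring
    _ = Real.exp (-(l*μ)) * ((∑ s, p s) * Real.cosh l + (∑ s, p s * g s) * Real.sinh l) := by
        rw [← Finset.mul_sum, Finset.sum_add_distrib, ← Finset.sum_mul, ← Finset.sum_mul]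
    _ = Real.exp (-(l*μ)) * (Real.cosh l + μ * Real.sinh l) := by
        rw [hp.2, hμdef]; simp [expct]
    _ ≤ Real.exp (-(l*μ)) * Real.exp (l^2/2 + l*μ) :=
        mul_le_mul_of_nonneg_left (hoeffA hμ l) (Real.exp_nonneg _)
    _ = Real.exp (l^2/2) := by rw [← Real.exp_add]; congr 1; ring

lemma chernoff {S : Type*} [Fintype S] {p : S → ℝ} (hp : IsDist p)
    (g : S → ℝ) (hg : ∀ s, g s = 1 ∨ g s = -1) (N : ℕ) (t : ℝ) (ht : 0 ≤ t) :
    prodProb p N (fun x => (N:ℝ) * t ≤ (∑ i, g (x i)) - (N:ℝ) * expct p g)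
      ≤ Real.exp (-(N:ℝ) * t ^ 2 / 2) := by
  classical
  set μ := expct p g with hμdef
  unfold prodProb
  have hterm : ∀ x : Fin N → S,
      (if (N:ℝ)*t ≤ (∑ i, g (x i)) - (N:ℝ)*μ then ∏ i, p (x i) else 0)
      ≤ Real.exp (-(N:ℝ)*t^2) * ∏ i, (p (x i) * Real.exp (t * (g (x i) - μ))) := by
    intro x
    have hw : 0 ≤ ∏ i, p (x i) := Finset.prod_nonneg fun i _ => (hp.1 _).1
    have hsum : ∑ i, t * (g (x i) - μ) = t * ((∑ i, g (x i)) - (N:ℝ)*μ) := by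
      simp only [mul_sub, Finset.sum_sub_distrib, ← Finset.mul_sum, Finset.sum_const,
        Finset.card_univ, Fintype.card_fin, nsmul_eq_mul]
      try ring
    have hprod : Real.exp (-(N:ℝ)*t^2) * ∏ i, (p (x i) * Real.exp (t * (g (x i) - μ)))
        = (∏ i, p (x i)) * Real.exp (t * ((∑ i, g (x i)) - (N:ℝ)*μ) + (-(N:ℝ)*t^2)) := by
      rw [Finset.prod_mul_distrib, ← Real.exp_sum, hsum, Real.exp_add]
      ring
    rw [hprod]
    split_ifs with hE
    · have h1 : (1:ℝ) ≤ Real.exp (t * ((∑ i, g (x i)) - (N:ℝ)*μ) + (-(N:ℝ)*t^2)) := by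
        rw [show (1:ℝ) = Real.exp 0 from Real.exp_zero.symm]
        apply Real.exp_le_exp.mpr
        nlinarith [mul_le_mul_of_nonneg_left hE ht]
      nlinarith
    · positivity
  calc (∑ x : Fin N → S, if (N:ℝ)*t ≤ (∑ i, g (x i)) - (N:ℝ)*μ then ∏ i, p (x i) else 0)
      ≤ ∑ x : Fin N → S, Real.exp (-(N:ℝ)*t^2) * ∏ i, (p (x i) * Real.exp (t * (g (x i) - μ))) :=
        Finset.sum_le_sum fun x _ => hterm x
    _ = Real.exp (-(N:ℝ)*t^2) * ∑ x : Fin N → S, ∏ i, (p (x i) * Real.exp (t * (g (x i) - μ))) := by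
        rw [Finset.mul_sum]
    _ = Real.exp (-(N:ℝ)*t^2) * (∑ s, p s * Real.exp (t * (g s - μ)))^N :=
        congrArg _ (Fintype.sum_pow (fun s => p s * Real.exp (t * (g s - μ))) N).symm
    _ ≤ Real.exp (-(N:ℝ)*t^2) * (Real.exp (t^2/2))^N := by
        refine mul_le_mul_of_nonneg_left ?_ (Real.exp_nonneg _)
        refine pow_le_pow_left₀ ?_ (mgf_le hp g hg t) N
        exact Finset.sum_nonneg fun s _ => mul_nonneg (hp.1 s).1 (Real.exp_nonneg _)
    _ = Real.exp (-(N:ℝ)*t^2/2) := by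
        rw [← Real.exp_nat_mul, ← Real.exp_add]; congr 1; ring

lemma stile_det {S P : Type*} [Fintype S] [Fintype P]
    (d : P → S → ℝ) (dE : S → ℝ)
    (πstar : P) (hst : dE = d πstar)
    (r : S → ℝ) (hr : ∀ s, 0 ≤ r s ∧ r s ≤ 1)
    (γ : ℝ) (hγ : 0 ≤ γ ∧ γ < 1) {N : ℕ} (x : Fin N → S)
    (ε : ℝ) (hε : 0 ≤ ε)
    (hgood : ∀ a b : P, a ≠ b →
      |expct dE (witness (d a) (d b)) - (1/(N:ℝ)) * ∑ i, witness (d a) (d b) (x i)| ≤ 2*ε)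
    (πhat : P) (hmin : ∀ π', stileObj d x πhat ≤ stileObj d x π') :
    expct dE r / (1-γ) - expct (d πhat) r / (1-γ) ≤ (4/(1-γ)) * ε := by
  have h1γ : 0 < 1 - γ := by linarith [hγ.2]
  by_cases hhat : πhat = πstar
  · rw [hhat, hst, sub_self]
    positivity
  · set f := witness (d πhat) (d πstar) with hf
    have hBdd : ∀ π : P, BddAbove {v : ℝ | ∃ a b : P, a ≠ b ∧
        v = expct (d π) (witness (d a) (d b))
            - (1/(N:ℝ)) * ∑ i, witness (d a) (d b) (x i)} := by
      intro π
      apply Set.Finite.bddAbove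
      apply Set.Finite.subset (Set.finite_range (fun ab : P × P =>
        expct (d π) (witness (d ab.1) (d ab.2))
          - (1/(N:ℝ)) * ∑ i, witness (d ab.1) (d ab.2) (x i)))
      rintro v ⟨a, b, _, rfl⟩
      exact ⟨(a, b), rfl⟩
    have e1 : expct (d πhat) f - (1/(N:ℝ)) * ∑ i, f (x i) ≤ stileObj d x πhat :=
      le_csSup (hBdd πhat) ⟨πhat, πstar, hhat, rfl⟩
    have e3 : stileObj d x πstar ≤ 2*ε := by
      apply Real.sSup_le
      · rintro v ⟨a, b, hab, rfl⟩
        have h := hgood a b hab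
        rw [hst] at h
        exact le_trans (le_abs_self _) h
      · positivity
    have e2 : stileObj d x πhat ≤ 2*ε := le_trans (hmin πstar) e3
    have e4 : (1/(N:ℝ)) * ∑ i, f (x i) - expct dE f ≤ 2*ε := by
      have h := abs_le.mp (hgood πhat πstar hhat)
      rw [← hf] at h
      linarith [h.1]
    have e5 : expct (d πhat) f - expct dE f ≤ 4*ε := by linarith
    have key : expct dE r - expct (d πhat) r ≤ expct (d πhat) f - expct dE f := by
      rw [hst]
      unfold expct
      rw [← Finset.sum_sub_distrib, ← Finset.sum_sub_distrib]
      apply Finset.sum_le_sum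
      intro s _
      have hrs := hr s
      rw [hf]
      unfold witness
      split_ifs with hle
      · nlinarith
      · push_neg at hle; nlinarith
    have hfinal : expct dE r - expct (d πhat) r ≤ 4*ε := le_trans key e5
    rw [div_sub_div_same, show (4/(1-γ))*ε = (4*ε)/(1-γ) by ring]
    exact (div_le_div_iff_of_pos_right h1γ).mpr hfinal


/-- Sample complexity of STILE in the realizable case (`d^E = d^{π*}` for some
`π* ∈ Π`): with probability at least `1 − δ` over the i.i.d. sample from `d^E`,
every STILE output `π̂` satisfies
`V(d^E) − V(d^{π̂}) ≤ (4/(1−γ)) √((2 ln|Π| + ln(1/δ))/N)`. -/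
theorem stile_realizable
    {S P : Type*} [Fintype S] [Nonempty S] [Fintype P]
    (hP : 2 ≤ Fintype.card P)
    (d : P → S → ℝ) (hd : ∀ π, IsDist (d π))
    (dE : S → ℝ) (hdE : IsDist dE)
    (hreal : ∃ πstar : P, dE = d πstar)
    (r : S → ℝ) (hr : ∀ s, 0 ≤ r s ∧ r s ≤ 1)
    (γ : ℝ) (hγ : 0 ≤ γ ∧ γ < 1)
    (δ : ℝ) (hδ : 0 < δ ∧ δ < 1)
    (N : ℕ) (hN : 1 ≤ N) :
    1 - δ ≤ prodProb dE N (fun x => ∀ πhat : P,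
      (∀ π' : P, stileObj d x πhat ≤ stileObj d x π') →
      expct dE r / (1 - γ) - expct (d πhat) r / (1 - γ) ≤
        (4 / (1 - γ)) *
          Real.sqrt ((2 * Real.log (Fintype.card P) + Real.log (1 / δ)) / N)) := by
  classical
  obtain ⟨πstar, hst⟩ := hreal
  have hpnn : ∀ s, 0 ≤ dE s := fun s => (hdE.1 s).1
  have hN0 : (0:ℝ) < N := by exact_mod_cast Nat.lt_of_lt_of_le Nat.zero_lt_one hN
  set K : ℝ := (Fintype.card P : ℝ) with hK
  have hK2 : (2:ℝ) ≤ K := by rw [hK]; exact_mod_cast hP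
  have hKpos : (0:ℝ) < K := by linarith
  set L : ℝ := 2 * Real.log K + Real.log (1/δ) with hL
  have hlogK : 0 < Real.log K := Real.log_pos (by linarith)
  have hlogδ : 0 < Real.log (1/δ) := Real.log_pos (by
    rw [lt_div_iff₀ hδ.1]; linarith [hδ.2])
  have hLpos : 0 < L := by rw [hL]; linarith
  set ε : ℝ := Real.sqrt (L / N) with hεdef
  have hεnn : 0 ≤ ε := Real.sqrt_nonneg _
  have hε2 : (N:ℝ) * ε^2 = L := by
    rw [hεdef, Real.sq_sqrt (by positivity)]
    field_simp
  have hmain : ∀ x : Fin N → S,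
      (∀ a b : P, a ≠ b →
        |expct dE (witness (d a) (d b)) - (1/(N:ℝ)) * ∑ i, witness (d a) (d b) (x i)| ≤ 2*ε) →
      (∀ πhat : P, (∀ π' : P, stileObj d x πhat ≤ stileObj d x π') →
        expct dE r / (1 - γ) - expct (d πhat) r / (1 - γ) ≤ (4 / (1 - γ)) * ε) :=
    fun x hx πhat hmin => stile_det d dE πstar hst r hr γ hγ x ε hεnn hx πhat hmin
  refine le_trans ?_ (prodProb_mono hpnn hmain)
  rw [prodProb_compl hdE]
  -- suffices: bad probability ≤ δ
  have hbad : prodProb dE N (fun x => ¬ ∀ a b : P, a ≠ b →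
      |expct dE (witness (d a) (d b)) - (1/(N:ℝ)) * ∑ i, witness (d a) (d b) (x i)| ≤ 2*ε)
      ≤ δ := by
    set gg : P × P × Bool → S → ℝ := fun i s =>
      if i.2.2 then -(witness (d i.1) (d i.2.1) s) else witness (d i.1) (d i.2.1) s with hgg
    have hggpm : ∀ i s, gg i s = 1 ∨ gg i s = -1 := by
      intro i s
      rcases witness_pm (d i.1) (d i.2.1) s with h | h <;>
        by_cases hb : i.2.2 <;> simp [hgg, hb, h]
    set Ev : P × P × Bool → (Fin N → S) → Prop := fun i x =>
      (N:ℝ) * (2*ε) ≤ (∑ j, gg i (x j)) - (N:ℝ) * expct dE (gg i) with hEv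
    have himp : ∀ x : Fin N → S, (¬ ∀ a b : P, a ≠ b →
        |expct dE (witness (d a) (d b)) - (1/(N:ℝ)) * ∑ i, witness (d a) (d b) (x i)| ≤ 2*ε) →
        ∃ i, Ev i x := by
      intro x hx
      push_neg at hx
      obtain ⟨a, b, hab, habs⟩ := hx
      have hNinv : (N:ℝ) * (1/(N:ℝ)) = 1 := mul_one_div_cancel hN0.ne'
      have hnegE : expct dE (fun s => -(witness (d a) (d b) s)) = -expct dE (witness (d a) (d b)) := by
        unfold expct; simp [mul_neg]
      have h4 : (N:ℝ) * (1/(N:ℝ) * ∑ i, witness (d a) (d b) (x i))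
          = ∑ i, witness (d a) (d b) (x i) := by rw [← mul_assoc, hNinv, one_mul]
      rcases lt_abs.mp habs with h | h
      · refine ⟨(a, b, true), ?_⟩
        have h3 := mul_lt_mul_of_pos_left h hN0
        have h5 : (N:ℝ) * (expct dE (witness (d a) (d b))
            - 1/(N:ℝ) * ∑ i, witness (d a) (d b) (x i))
            = (N:ℝ) * expct dE (witness (d a) (d b)) - ∑ i, witness (d a) (d b) (x i) := by
          rw [mul_sub, h4]
        rw [h5] at h3
        show (N:ℝ) * (2*ε) ≤ (∑ j, gg (a,b,true) (x j)) - (N:ℝ) * expct dE (gg (a,b,true))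
        have hgga : gg (a,b,true) = fun s => -(witness (d a) (d b) s) := rfl
        rw [hgga, hnegE]
        rw [show (∑ j, (fun s => -(witness (d a) (d b) s)) (x j))
            = -(∑ j, witness (d a) (d b) (x j)) by simp]
        linarith
      · refine ⟨(a, b, false), ?_⟩
        have h3 := mul_lt_mul_of_pos_left h hN0
        have h5 : (N:ℝ) * (-(expct dE (witness (d a) (d b))
            - 1/(N:ℝ) * ∑ i, witness (d a) (d b) (x i)))
            = (∑ i, witness (d a) (d b) (x i)) - (N:ℝ) * expct dE (witness (d a) (d b)) := by
          rw [mul_neg, mul_sub, h4]; ring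
        rw [h5] at h3
        show (N:ℝ) * (2*ε) ≤ (∑ j, gg (a,b,false) (x j)) - (N:ℝ) * expct dE (gg (a,b,false))
        have hgga : gg (a,b,false) = witness (d a) (d b) := rfl
        rw [hgga]
        linarith
    have hexpL : -(N:ℝ)*(2*ε)^2/2 = -(2*L) := by rw [← hε2]; ring
    have hexpval : Real.exp (-(2*L)) = δ^2 / K^4 := by
      have hlogeq : -(2*L) = Real.log (δ^2 / K^4) := by
        rw [Real.log_div (pow_ne_zero 2 hδ.1.ne') (pow_ne_zero 4 hKpos.ne'),
          Real.log_pow, Real.log_pow, hL, one_div, Real.log_inv]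
        push_cast
        ring
      rw [hlogeq, Real.exp_log (div_pos (pow_pos hδ.1 2) (pow_pos hKpos 4))]
    calc prodProb dE N (fun x => ¬ ∀ a b : P, a ≠ b →
          |expct dE (witness (d a) (d b)) - (1/(N:ℝ)) * ∑ i, witness (d a) (d b) (x i)| ≤ 2*ε)
        ≤ prodProb dE N (fun x => ∃ i, Ev i x) := prodProb_mono hpnn himp
      _ ≤ ∑ i : P × P × Bool, prodProb dE N (Ev i) := prodProb_exists hpnn Ev
      _ ≤ ∑ _i : P × P × Bool, Real.exp (-(N:ℝ)*(2*ε)^2/2) :=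
          Finset.sum_le_sum fun i _ => chernoff hdE (gg i) (hggpm i) N (2*ε) (by linarith)
      _ = (Fintype.card (P × P × Bool) : ℝ) * Real.exp (-(N:ℝ)*(2*ε)^2/2) := by
          rw [Finset.sum_const, Finset.card_univ, nsmul_eq_mul]
      _ = 2*K^2 * Real.exp (-(2*L)) := by
          rw [hexpL, Fintype.card_prod, Fintype.card_prod, Fintype.card_bool]
          push_cast
          ring
      _ ≤ δ := by
          rw [hexpval, show 2*K^2 * (δ^2/K^4) = 2*K^2*δ^2/K^4 by ring,
            div_le_iff₀ (by positivity)]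
          have hδ2 : δ^2 ≤ δ := by nlinarith [hδ.1.le, hδ.2.le]
          have h4K : (4:ℝ) ≤ K^2 := by nlinarith
          nlinarith [mul_nonneg (mul_nonneg (by linarith : (0:ℝ) ≤ K^2 - 2) (sq_nonneg K)) hδ.1.le,
            mul_le_mul_of_nonneg_left hδ2 (by positivity : (0:ℝ) ≤ 2*K^2)]
  linarith
end

section
/- Exponential-weights (Online Mirror Descent with negative-entropy regularizer) regret bound: let A be a finite set with |A| ≥ 2, let B > 0, let N ≥ 1, and let ℓ₁,…,ℓ_N : A → ℝ be loss vectors with |ℓ_t(a)| ≤ B for all t ∈ {1,…,N} and a ∈ A. Set the learning rate η := √( 2 ln|A| / (N B²) ) and define, for each t, the probability vector p_t on A by p_t(a) := exp(−η ∑_{s=1}^{t−1} ℓ_s(a)) / ∑_{a'∈A} exp(−η ∑_{s=1}^{t−1} ℓ_s(a')). Then (1/N) ∑_{t=1}^N ∑_{a∈A} p_t(a) ℓ_t(a) − min_{a∈A} (1/N) ∑_{t=1}^N ℓ_t(a) ≤ √( 2 B² ln|A| / N ). -/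
/-!
STATEMENT 9: Exponential-weights (Online Mirror Descent with negative-entropy
regularizer) regret bound.
-/

open Finset

/-- Cumulative loss of action `a` over rounds before `t`: `∑_{s<t} ℓ_s(a)`. -/
def cumLoss {A : Type*} {N : ℕ} (ℓ : Fin N → A → ℝ) (t : Fin N) (a : A) : ℝ :=
  ∑ s ∈ Finset.univ.filter (fun s => s < t), ℓ s a

/-- The exponential-weights probability vector at round `t` with learning rate
`η`: `p_t(a) = exp(−η ∑_{s<t} ℓ_s(a)) / ∑_{a'} exp(−η ∑_{s<t} ℓ_s(a'))`. -/
noncomputable def ewWeight {A : Type*} [Fintype A] {N : ℕ}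
    (η : ℝ) (ℓ : Fin N → A → ℝ) (t : Fin N) (a : A) : ℝ :=
  Real.exp (-η * cumLoss ℓ t a) / ∑ a' : A, Real.exp (-η * cumLoss ℓ t a')



lemma quot_aux (d e : ℝ) (hd : d ≠ 0) : (d * d - e * e) / d ^ 2 - 1 = -(e / d) ^ 2 := by
  field_simp; ring

lemma hoeffding_core (q : ℝ) (hq0 : 0 ≤ q) (hq1 : q ≤ 1) (h : ℝ) (hh : 0 ≤ h) :
    q * Real.exp h + (1 - q) * Real.exp (-h) ≤ Real.exp ((2 * q - 1) * h + h ^ 2 / 2) := by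
  set D : ℝ → ℝ := fun x => q * Real.exp x + (1 - q) * Real.exp (-x) with hD
  set E : ℝ → ℝ := fun x => q * Real.exp x - (1 - q) * Real.exp (-x) with hE
  have hDpos : ∀ x, 0 < D x := by
    intro x
    rcases lt_or_eq_of_le hq0 with hq | hq
    · exact add_pos_of_pos_of_nonneg (mul_pos hq (Real.exp_pos _))
        (mul_nonneg (by linarith) (Real.exp_pos _).le)
    · simp only [hD, ← hq]
      nlinarith [Real.exp_pos (-x)]
  have hD0 : D 0 = 1 := by simp [hD]
  have hE0 : E 0 = 2 * q - 1 := by simp [hE]; ring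
  have hexp' : ∀ x : ℝ, HasDerivAt (fun y => Real.exp (-y)) (-Real.exp (-x)) x := by
    intro x
    simpa using (hasDerivAt_neg x).exp
  have hD' : ∀ x, HasDerivAt D (E x) x := by
    intro x
    have h1 := ((Real.hasDerivAt_exp x).const_mul q).add ((hexp' x).const_mul (1 - q))
    refine h1.congr_deriv ?_
    simp only [hE]; ring
  have hE' : ∀ x, HasDerivAt E (D x) x := by
    intro x
    have h1 := ((Real.hasDerivAt_exp x).const_mul q).sub ((hexp' x).const_mul (1 - q))
    refine h1.congr_deriv ?_
    simp only [hD]; ring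
  -- step A : E x / D x - x is antitone
  have hg : ∀ x, HasDerivAt (fun y => E y / D y - y) (-(E x / D x) ^ 2) x := by
    intro x
    have hdiv := (hE' x).div (hD' x) (hDpos x).ne'
    have h2 := hdiv.sub (hasDerivAt_id x)
    rw [quot_aux (D x) (E x) (hDpos x).ne'] at h2
    exact h2
  have hgant : Antitone (fun y => E y / D y - y) :=
    antitone_of_deriv_nonpos (fun x => (hg x).differentiableAt)
      (fun x => by rw [(hg x).deriv]; nlinarith [sq_nonneg (E x / D x)])
  have hstepA : ∀ x, 0 ≤ x → E x / D x ≤ 2 * q - 1 + x := by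
    intro x hx
    have h1 := hgant hx
    simp only [hE0, hD0, div_one, sub_zero] at h1
    linarith
  -- step B : φ x = (2q-1)x + x²/2 - log (D x) is monotone on [0,∞)
  set φ : ℝ → ℝ := fun x => (2 * q - 1) * x + x ^ 2 / 2 - Real.log (D x) with hφ
  have hφ' : ∀ x, HasDerivAt φ ((2 * q - 1) + x - E x / D x) x := by
    intro x
    have h1 : HasDerivAt (fun y : ℝ => (2 * q - 1) * y) (2 * q - 1) x := by
      simpa using (hasDerivAt_id x).const_mul (2 * q - 1)
    have h2 : HasDerivAt (fun y : ℝ => y ^ 2 / 2) x x := by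
      have := (hasDerivAt_pow 2 x).div_const 2
      norm_num at this
      convert this using 1
    have h3 : HasDerivAt (fun y => Real.log (D y)) (E x / D x) x := (hD' x).log (hDpos x).ne'
    exact (h1.add h2).sub h3
  have hmono : MonotoneOn φ (Set.Ici (0 : ℝ)) := by
    apply monotoneOn_of_deriv_nonneg (convex_Ici 0)
      (fun x _ => ((hφ' x).differentiableAt).continuousAt.continuousWithinAt)
      (fun x _ => ((hφ' x).differentiableAt).differentiableWithinAt)
    intro x hx
    rw [(hφ' x).deriv]
    rw [interior_Ici] at hx
    have := hstepA x (le_of_lt hx)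
    linarith
  have hφ0 : φ 0 = 0 := by simp [hφ, hD0]
  have hmle := hmono (Set.self_mem_Ici) (Set.mem_Ici.mpr hh) hh
  rw [hφ0] at hmle
  have hlog : Real.log (D h) ≤ (2 * q - 1) * h + h ^ 2 / 2 := by
    simp only [hφ] at hmle; linarith
  calc D h = Real.exp (Real.log (D h)) := (Real.exp_log (hDpos h)).symm
    _ ≤ Real.exp ((2 * q - 1) * h + h ^ 2 / 2) := Real.exp_le_exp.mpr hlog

lemma exp_weighted {A : Type*} [Fintype A] (η B : ℝ) (hη : 0 ≤ η) (hB : 0 < B)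
    (w x : A → ℝ) (hw0 : ∀ a, 0 ≤ w a) (hw1 : ∑ a, w a = 1) (hx : ∀ a, |x a| ≤ B) :
    ∑ a, w a * Real.exp (-η * x a)
      ≤ Real.exp (-η * (∑ a, w a * x a) + η ^ 2 * B ^ 2 / 2) := by
  set μ := ∑ a, w a * x a with hμ
  have hxB : ∀ a, -B ≤ x a ∧ x a ≤ B := fun a => abs_le.mp (hx a)
  have hμup : μ ≤ B := by
    calc μ ≤ ∑ a, w a * B :=
        Finset.sum_le_sum fun a _ => mul_le_mul_of_nonneg_left (hxB a).2 (hw0 a)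
      _ = B := by rw [← Finset.sum_mul, hw1, one_mul]
  have hμlo : -B ≤ μ := by
    calc -B = ∑ a, w a * (-B) := by rw [← Finset.sum_mul, hw1, one_mul]
      _ ≤ μ := Finset.sum_le_sum fun a _ => mul_le_mul_of_nonneg_left (hxB a).1 (hw0 a)
  -- pointwise convexity bound
  have hpt : ∀ a, Real.exp (-η * x a)
      ≤ (B - x a) / (2 * B) * Real.exp (η * B) + (B + x a) / (2 * B) * Real.exp (-(η * B)) := by
    intro a
    have hc1 : (0:ℝ) ≤ (B - x a) / (2 * B) :=
      div_nonneg (by have := (hxB a).2; linarith) (by positivity)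
    have hc2 : (0:ℝ) ≤ (B + x a) / (2 * B) :=
      div_nonneg (by have := (hxB a).1; linarith) (by positivity)
    have hcvx := convexOn_exp.2 (Set.mem_univ (η * B)) (Set.mem_univ (-(η * B)))
      hc1 hc2 (by rw [← add_div, div_eq_one_iff_eq (by positivity : (2:ℝ)*B ≠ 0)]; ring)
    have harg : ((B - x a) / (2 * B)) • (η * B) + ((B + x a) / (2 * B)) • (-(η * B)) = -η * x a := by
      simp only [smul_eq_mul]
      field_simp
      ring
    rw [harg] at hcvx
    simpa using hcvx
  have e1 : ∑ a, w a * ((B - x a) / (2 * B)) = (B - μ) / (2 * B) := by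
    calc ∑ a, w a * ((B - x a) / (2 * B)) = (∑ a, (w a * B - w a * x a)) / (2 * B) := by
          rw [Finset.sum_div]; exact Finset.sum_congr rfl fun a _ => by ring
      _ = ((∑ a, w a) * B - μ) / (2 * B) := by rw [Finset.sum_sub_distrib, ← Finset.sum_mul]
      _ = (B - μ) / (2 * B) := by rw [hw1, one_mul]
  have e2 : ∑ a, w a * ((B + x a) / (2 * B)) = (B + μ) / (2 * B) := by
    calc ∑ a, w a * ((B + x a) / (2 * B)) = (∑ a, (w a * B + w a * x a)) / (2 * B) := by
          rw [Finset.sum_div]; exact Finset.sum_congr rfl fun a _ => by ring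
      _ = ((∑ a, w a) * B + μ) / (2 * B) := by rw [Finset.sum_add_distrib, ← Finset.sum_mul]
      _ = (B + μ) / (2 * B) := by rw [hw1, one_mul]
  have hsum : ∑ a, w a * Real.exp (-η * x a)
      ≤ (B - μ) / (2 * B) * Real.exp (η * B) + (B + μ) / (2 * B) * Real.exp (-(η * B)) := by
    calc ∑ a, w a * Real.exp (-η * x a)
        ≤ ∑ a, w a * ((B - x a) / (2 * B) * Real.exp (η * B)
            + (B + x a) / (2 * B) * Real.exp (-(η * B))) :=
          Finset.sum_le_sum fun a _ => mul_le_mul_of_nonneg_left (hpt a) (hw0 a)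
      _ = ∑ a, (w a * ((B - x a) / (2 * B)) * Real.exp (η * B)
            + w a * ((B + x a) / (2 * B)) * Real.exp (-(η * B))) :=
          Finset.sum_congr rfl fun a _ => by ring
      _ = (∑ a, w a * ((B - x a) / (2 * B))) * Real.exp (η * B)
            + (∑ a, w a * ((B + x a) / (2 * B))) * Real.exp (-(η * B)) := by
          rw [Finset.sum_add_distrib, Finset.sum_mul, Finset.sum_mul]
      _ = (B - μ) / (2 * B) * Real.exp (η * B) + (B + μ) / (2 * B) * Real.exp (-(η * B)) := by
          rw [e1, e2]
  refine hsum.trans ?_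
  have hq0 : 0 ≤ (B - μ) / (2 * B) := by
    have : 0 ≤ B - μ := by linarith
    positivity
  have hq1 : (B - μ) / (2 * B) ≤ 1 := by
    rw [div_le_one (by positivity)]; linarith
  have hcore := hoeffding_core ((B - μ) / (2 * B)) hq0 hq1 (η * B) (by positivity)
  have hq' : 1 - (B - μ) / (2 * B) = (B + μ) / (2 * B) := by
    field_simp
    ring
  rw [hq'] at hcore
  refine hcore.trans_eq ?_
  congr 1
  field_simp
  ring

/-- extended loss sequence on `ℕ`. -/
def ewELoss {A : Type*} {N : ℕ} (ℓ : Fin N → A → ℝ) (n : ℕ) (a : A) : ℝ :=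
  if h : n < N then ℓ ⟨n, h⟩ a else 0

def ewCL {A : Type*} {N : ℕ} (ℓ : Fin N → A → ℝ) (n : ℕ) (a : A) : ℝ :=
  ∑ s ∈ Finset.range n, ewELoss ℓ s a

noncomputable def ewW {A : Type*} [Fintype A] {N : ℕ} (η : ℝ) (ℓ : Fin N → A → ℝ) (n : ℕ) : ℝ :=
  ∑ a, Real.exp (-η * ewCL ℓ n a)

noncomputable def ewIP {A : Type*} [Fintype A] {N : ℕ} (η : ℝ) (ℓ : Fin N → A → ℝ) (s : ℕ) : ℝ :=
  if h : s < N then ∑ a, ewWeight η ℓ ⟨s, h⟩ a * ℓ ⟨s, h⟩ a else 0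

lemma cumLoss_eq_ewCL {A : Type*} {N : ℕ} (ℓ : Fin N → A → ℝ) (t : Fin N) (a : A) :
    cumLoss ℓ t a = ewCL ℓ t.val a := by
  unfold cumLoss ewCL
  refine Finset.sum_nbij' (i := fun (s : Fin N) => (s : ℕ))
    (j := fun s => if h : s < N then (⟨s, h⟩ : Fin N) else t) ?_ ?_ ?_ ?_ ?_
  · intro s hs
    simp only [Finset.mem_filter, Finset.mem_univ, true_and] at hs
    exact Finset.mem_range.mpr hs
  · intro s hs
    have hsN : s < N := lt_trans (Finset.mem_range.mp hs) t.isLt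
    simp only [dif_pos hsN, Finset.mem_filter, Finset.mem_univ, true_and]
    exact Finset.mem_range.mp hs
  · intro s hs
    simp [s.isLt]
  · intro s hs
    have hsN : s < N := lt_trans (Finset.mem_range.mp hs) t.isLt
    simp [hsN]
  · intro s hs
    have hsN : (s : ℕ) < N := s.isLt
    simp [ewELoss, hsN]

lemma ewW_pos {A : Type*} [Fintype A] [Nonempty A] {N : ℕ} (η : ℝ) (ℓ : Fin N → A → ℝ)
    (n : ℕ) : 0 < ewW η ℓ n :=
  Finset.sum_pos (fun a _ => Real.exp_pos _) Finset.univ_nonempty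

lemma ewWeight_eq {A : Type*} [Fintype A] {N : ℕ} (η : ℝ) (ℓ : Fin N → A → ℝ) (t : Fin N)
    (a : A) : ewWeight η ℓ t a = Real.exp (-η * ewCL ℓ t.val a) / ewW η ℓ t.val := by
  unfold ewWeight ewW
  rw [cumLoss_eq_ewCL]
  congr 1
  exact Finset.sum_congr rfl fun a' _ => by rw [cumLoss_eq_ewCL]

lemma ewW_step {A : Type*} [Fintype A] [Nonempty A] {N : ℕ} (η B : ℝ) (hη : 0 ≤ η)
    (hB : 0 < B) (ℓ : Fin N → A → ℝ) (hℓ : ∀ t a, |ℓ t a| ≤ B) (n : ℕ) (hn : n < N) :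
    ewW η ℓ (n + 1) ≤ ewW η ℓ n * Real.exp (-η * ewIP η ℓ n + η ^ 2 * B ^ 2 / 2) := by
  set t : Fin N := ⟨n, hn⟩ with ht
  have hWpos := ewW_pos η ℓ n (A := A)
  have hw0 : ∀ a, 0 ≤ ewWeight η ℓ t a := by
    intro a
    rw [ewWeight_eq]
    positivity
  have hw1 : ∑ a, ewWeight η ℓ t a = 1 := by
    simp only [ewWeight_eq]
    rw [← Finset.sum_div]
    exact div_self hWpos.ne'
  have key : ewW η ℓ (n + 1) = ewW η ℓ n * ∑ a, ewWeight η ℓ t a * Real.exp (-η * ℓ t a) := by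
    rw [Finset.mul_sum]
    show ∑ a, Real.exp (-η * ewCL ℓ (n + 1) a) = _
    refine Finset.sum_congr rfl fun a _ => ?_
    have hCL : ewCL ℓ (n + 1) a = ewCL ℓ n a + ℓ t a := by
      unfold ewCL
      rw [Finset.sum_range_succ]
      congr 1
      simp [ewELoss, hn, ht]
    have hvt : (t : ℕ) = n := rfl
    rw [hCL, ewWeight_eq, hvt]
    have hfs : ewW η ℓ n * (Real.exp (-η * ewCL ℓ n a) / ewW η ℓ n * Real.exp (-η * ℓ t a))
        = Real.exp (-η * ewCL ℓ n a) * Real.exp (-η * ℓ t a) := by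
      field_simp
    rw [hfs, ← Real.exp_add]
    congr 1
    ring
  rw [key]
  have hIP : ewIP η ℓ n = ∑ a, ewWeight η ℓ t a * ℓ t a := by simp [ewIP, hn, ht]
  rw [hIP]
  exact mul_le_mul_of_nonneg_left
    (exp_weighted η B hη hB _ _ hw0 hw1 (fun a => hℓ t a)) hWpos.le

lemma ewW_bound {A : Type*} [Fintype A] [Nonempty A] {N : ℕ} (η B : ℝ) (hη : 0 ≤ η)
    (hB : 0 < B) (ℓ : Fin N → A → ℝ) (hℓ : ∀ t a, |ℓ t a| ≤ B) :
    ∀ n, n ≤ N → ewW η ℓ n ≤ ewW η ℓ 0 *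
      Real.exp ((∑ s ∈ Finset.range n, (-η * ewIP η ℓ s)) + n * (η ^ 2 * B ^ 2 / 2)) := by
  intro n
  induction n with
  | zero => intro _; simp
  | succ n ih =>
    intro hn1
    have hn : n < N := hn1
    have h1 := ewW_step η B hη hB ℓ hℓ n hn
    have h2 := ih (le_of_lt hn)
    calc ewW η ℓ (n + 1) ≤ ewW η ℓ n * Real.exp (-η * ewIP η ℓ n + η ^ 2 * B ^ 2 / 2) := h1
      _ ≤ (ewW η ℓ 0 * Real.exp ((∑ s ∈ Finset.range n, (-η * ewIP η ℓ s))
            + n * (η ^ 2 * B ^ 2 / 2))) * Real.exp (-η * ewIP η ℓ n + η ^ 2 * B ^ 2 / 2) :=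
          mul_le_mul_of_nonneg_right h2 (Real.exp_pos _).le
      _ = ewW η ℓ 0 * Real.exp ((∑ s ∈ Finset.range (n + 1), (-η * ewIP η ℓ s))
            + (n + 1 : ℕ) * (η ^ 2 * B ^ 2 / 2)) := by
          rw [mul_assoc, ← Real.exp_add, Finset.sum_range_succ]
          congr 2
          push_cast
          ring

/-- Exponential-weights regret bound: with `|A| ≥ 2`, losses bounded by `B > 0`,
`N ≥ 1` rounds, and learning rate `η = √(2 ln|A| / (N B²))`, the average regret
of the exponential-weights iterates is at most `√(2 B² ln|A| / N)`. -/
theorem exp_weights_regret {A : Type*} [Fintype A]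
    (hA : 2 ≤ Fintype.card A)
    (B : ℝ) (hB : 0 < B)
    (N : ℕ) (hN : 1 ≤ N)
    (ℓ : Fin N → A → ℝ) (hℓ : ∀ t a, |ℓ t a| ≤ B) :
    (1 / (N : ℝ)) * ∑ t,
        ∑ a, ewWeight (Real.sqrt (2 * Real.log (Fintype.card A) / (N * B ^ 2))) ℓ t a
          * ℓ t a
      - (⨅ a : A, (1 / (N : ℝ)) * ∑ t, ℓ t a)
      ≤ Real.sqrt (2 * B ^ 2 * Real.log (Fintype.card A) / N) := by
  classical
  have hKcard : (2 : ℝ) ≤ (Fintype.card A : ℝ) := by exact_mod_cast hA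
  have hlogK : 0 < Real.log (Fintype.card A) := Real.log_pos (by linarith)
  have hNpos : (0 : ℝ) < (N : ℝ) := by exact_mod_cast hN
  have hne : Nonempty A := Fintype.card_pos_iff.mp (by omega)
  set η := Real.sqrt (2 * Real.log (Fintype.card A) / (N * B ^ 2)) with hηdef
  have hargpos : 0 < 2 * Real.log (Fintype.card A) / ((N : ℝ) * B ^ 2) :=
    div_pos (by linarith) (by positivity)
  have hηpos : 0 < η := Real.sqrt_pos.mpr hargpos
  have hη2 : η ^ 2 = 2 * Real.log (Fintype.card A) / ((N : ℝ) * B ^ 2) :=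
    Real.sq_sqrt hargpos.le
  have h2log : 2 * Real.log (Fintype.card A) = η ^ 2 * ((N : ℝ) * B ^ 2) := by
    rw [hη2]; field_simp
  have hW0 : ewW η ℓ 0 = (Fintype.card A : ℝ) := by simp [ewW, ewCL]
  set S := ∑ t : Fin N, ∑ a, ewWeight η ℓ t a * ℓ t a with hS
  have hsumIP : ∑ s ∈ Finset.range N, ewIP η ℓ s = S := by
    rw [hS, ← Fin.sum_univ_eq_sum_range (fun s => ewIP η ℓ s) N]
    exact Finset.sum_congr rfl fun t _ => by simp [ewIP, t.isLt]
  have hup := ewW_bound η B hηpos.le hB ℓ hℓ N le_rfl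
  obtain ⟨a₀, ha₀⟩ := Finite.exists_min (fun a : A => (1 / (N : ℝ)) * ∑ t, ℓ t a)
  have hinf : (⨅ a : A, (1 / (N : ℝ)) * ∑ t, ℓ t a) = (1 / (N : ℝ)) * ∑ t, ℓ t a₀ :=
    le_antisymm (ciInf_le (Set.finite_range _).bddBelow a₀) (le_ciInf ha₀)
  set T := ∑ t : Fin N, ℓ t a₀ with hT
  have hCLN : ewCL ℓ N a₀ = T := by
    rw [hT]
    unfold ewCL
    rw [← Fin.sum_univ_eq_sum_range (fun s => ewELoss ℓ s a₀) N]
    exact Finset.sum_congr rfl fun t _ => by simp [ewELoss, t.isLt]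
  have hlow : Real.exp (-η * T) ≤ ewW η ℓ N := by
    rw [← hCLN]
    exact Finset.single_le_sum (f := fun a => Real.exp (-η * ewCL ℓ N a))
      (fun a _ => (Real.exp_pos _).le) (Finset.mem_univ a₀)
  have hcomb : Real.exp (-η * T) ≤ Real.exp (Real.log (Fintype.card A)
      + ((∑ s ∈ Finset.range N, (-η * ewIP η ℓ s)) + N * (η ^ 2 * B ^ 2 / 2))) := by
    refine hlow.trans (hup.trans_eq ?_)
    rw [hW0, Real.exp_add, Real.exp_add, Real.exp_add,
      Real.exp_log (show (0 : ℝ) < (Fintype.card A : ℝ) by linarith)]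
  have hexp := Real.exp_le_exp.mp hcomb
  have hsum' : ∑ s ∈ Finset.range N, (-η * ewIP η ℓ s) = -η * S := by
    rw [← Finset.mul_sum, hsumIP]
  rw [hsum'] at hexp
  have hkey : S - T ≤ η * ((N : ℝ) * B ^ 2) := by
    have e1 : η * (S - T) = η * S - η * T := by ring
    have e2 : η * (η * ((N : ℝ) * B ^ 2)) = η ^ 2 * ((N : ℝ) * B ^ 2) := by ring
    have h3 : η * (S - T) ≤ η * (η * ((N : ℝ) * B ^ 2)) := by
      rw [e1, e2]; linarith
    exact le_of_mul_le_mul_left h3 hηpos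
  rw [hinf]
  have hRHS : Real.sqrt (2 * B ^ 2 * Real.log (Fintype.card A) / N) = η * B ^ 2 := by
    have harg : 2 * B ^ 2 * Real.log (Fintype.card A) / N = (η * B ^ 2) ^ 2 := by
      have e3 : (η * B ^ 2) ^ 2 = η ^ 2 * (B ^ 2) ^ 2 := by ring
      rw [e3, hη2]
      field_simp
    rw [harg, Real.sqrt_sq (by positivity)]
  rw [hRHS]
  have e4 : (1 / (N : ℝ)) * S - (1 / (N : ℝ)) * T = (S - T) / N := by ring
  rw [e4, div_le_iff₀ hNpos]
  nlinarith [hkey]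
end
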